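/- arXiv:1804.04085 — 3 statements merged into one kernel-verified Lean document; each statement's English description precedes it below -/
import Mathlib

section
/- For every real ν ≥ 1 and every q ∈ (1/2, 1), the standard normal quantile is strictly smaller than the Student t quantile with ν degrees of freedom: z_q < t_{ν;q}. (This is the inequality z_{1−α/2} < t_{n−p;1−α/2} used in the proof of Theorem 1.) -/
open Real Set

/-- Standard normal cumulative distribution function. -/
noncomputable def stdNormalCDF (x : ℝ) : ℝ :=
  ∫ t in Set.Iic x, (2 * π) ^ (-(1:ℝ)/2) * Real.exp (-t^2 / 2)

/-- Student t cumulative distribution function with `ν` degrees of freedom. -/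
noncomputable def studentCDF (ν : ℝ) (x : ℝ) : ℝ :=
  ∫ t in Set.Iic x,
    (Real.Gamma ((ν + 1) / 2) / (Real.sqrt (ν * π) * Real.Gamma (ν / 2))) *
      (1 + t ^ 2 / ν) ^ (-((ν + 1) / 2))

/-- Standard normal quantile `z_q`: the (unique) real with `stdNormalCDF z = q`. -/
noncomputable def zQuantile (q : ℝ) : ℝ := Function.invFun stdNormalCDF q

/-- Student t quantile `t_{ν;q}`: the (unique) real with `studentCDF ν t = q`. -/
noncomputable def tQuantile (ν q : ℝ) : ℝ := Function.invFun (studentCDF ν) q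

/-!
Both densities `φ` and `f_ν` are even with total mass `1`. The log-ratio `log φ - log f_ν` has
derivative `t (1 - t²) / (ν + t²)`, so on `(0, ∞)` it increases up to `t = 1` and decreases
afterwards, and it is nonnegative at `0` because log-convexity of `Γ` gives
`Γ((ν + 1)/2) ≤ √(ν/2) Γ(ν/2)`. Hence `φ - f_ν` is positive on some `(0, b)` and negative on
`(b, ∞)`. As it integrates to `0` over `(0, ∞)`, `Φ(x) - F_ν(x)` equals both `∫₀ˣ (φ - f_ν)` and
`∫ₓ^∞ (f_ν - φ)`, one of which is visibly positive for each `x > 0`. At `x = t_{ν;q} > 0` this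
gives `Φ(t_{ν;q}) > q = Φ(z_q)`.
-/

open MeasureTheory Filter Topology

section IntegralIic

variable {p : ℝ → ℝ}

theorem strictMono_integral_Iic (hp : Integrable p) (hpos : ∀ t, 0 < p t) :
    StrictMono fun x ↦ ∫ t in Iic x, p t := by
  intro a b hab
  dsimp only
  rw [← sub_pos, intervalIntegral.integral_Iic_sub_Iic hp.integrableOn hp.integrableOn]
  exact intervalIntegral.intervalIntegral_pos_of_pos_on hp.intervalIntegrable (fun t _ ↦ hpos t) hab

theorem continuous_integral_Iic (hp : Integrable p) : Continuous fun x ↦ ∫ t in Iic x, p t := by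
  have h : (fun x ↦ ∫ t in Iic x, p t)
      = fun x ↦ (∫ t in (0 : ℝ)..x, p t) + ∫ t in Iic 0, p t := by
    funext x
    rw [← intervalIntegral.integral_Iic_sub_Iic hp.integrableOn hp.integrableOn, sub_add_cancel]
  rw [h]
  exact (hp.continuous_primitive 0).add continuous_const

theorem exists_integral_Iic_eq (hp : Integrable p) {a q : ℝ} (ha : ∫ t in Iic a, p t ≤ q)
    (hq : q < ∫ t, p t) : ∃ x, ∫ t in Iic x, p t = q := by
  have hlim : Tendsto (fun x ↦ ∫ t in Iic x, p t) atTop (𝓝 (∫ t, p t)) :=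
    (aecover_Iic tendsto_id).integral_tendsto_of_countably_generated hp
  obtain ⟨b, hb⟩ := (hlim.eventually (eventually_gt_nhds hq)).exists
  exact intermediate_value_univ a b (continuous_integral_Iic hp) ⟨ha, hb.le⟩

theorem integral_Ioi_zero_eq_integral_Iic_zero_of_even (heven : ∀ t, p (-t) = p t) :
    ∫ t in Ioi 0, p t = ∫ t in Iic 0, p t := by
  simpa [heven] using integral_comp_neg_Ioi 0 p

theorem integral_Iic_zero_of_even (hp : Integrable p) (heven : ∀ t, p (-t) = p t) :
    ∫ t in Iic 0, p t = (∫ t, p t) / 2 := by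
  rw [← intervalIntegral.integral_Iic_add_Ioi hp.integrableOn hp.integrableOn,
    integral_Ioi_zero_eq_integral_Iic_zero_of_even heven]
  ring

theorem integral_Ioi_zero_of_even (hp : Integrable p) (heven : ∀ t, p (-t) = p t) :
    ∫ t in Ioi 0, p t = (∫ t, p t) / 2 := by
  rw [integral_Ioi_zero_eq_integral_Iic_zero_of_even heven, integral_Iic_zero_of_even hp heven]

theorem integral_Iic_pos_of_sign_change {g : ℝ → ℝ} (hg : Integrable g)
    (hIic : ∫ t in Iic 0, g t = 0) (htot : ∫ t, g t = 0)
    (hsign : ∀ s t, 0 < s → s < t → g s ≤ 0 → g t < 0) {x : ℝ} (hx : 0 < x) :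
    0 < ∫ t in Iic x, g t := by
  by_cases hpos : ∀ t ∈ Ioo 0 x, 0 < g t
  · have hsub := intervalIntegral.integral_Iic_sub_Iic hg.integrableOn hg.integrableOn
      (a := 0) (b := x)
    rw [hIic, sub_zero] at hsub
    rw [hsub]
    exact intervalIntegral.intervalIntegral_pos_of_pos_on hg.intervalIntegrable hpos hx
  · push Not at hpos
    obtain ⟨s, ⟨hs0, hsx⟩, hgs⟩ := hpos
    have hneg : ∀ t ∈ Ioi x, 0 < -g t := fun t ht ↦ neg_pos.2 (hsign s t hs0 (hsx.trans ht) hgs)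
    have hIoi : 0 < ∫ t in Ioi x, -g t := by
      rw [setIntegral_pos_iff_support_of_nonneg_ae
        (ae_restrict_of_forall_mem measurableSet_Ioi fun t ht ↦ (hneg t ht).le)
        hg.neg.integrableOn,
        inter_eq_right.2 fun t ht ↦ Function.mem_support.2 (hneg t ht).ne', Real.volume_Ioi]
      exact ENNReal.zero_lt_top
    have hsum := intervalIntegral.integral_Iic_add_Ioi hg.integrableOn hg.integrableOn (b := x)
    rw [integral_neg] at hIoi
    linarith

end IntegralIic

theorem lt_zero_of_nonpos_of_strictMonoOn_of_strictAntiOn {h : ℝ → ℝ} {a m s t : ℝ}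
    (hmono : StrictMonoOn h (Icc a m)) (hanti : StrictAntiOn h (Ici m)) (ha : 0 ≤ h a)
    (has : a < s) (hst : s < t) (hs : h s ≤ 0) : h t < 0 := by
  have hms : m < s := by
    by_contra! hsm
    exact (hmono ⟨le_rfl, has.le.trans hsm⟩ ⟨has.le, hsm⟩ has).not_ge (hs.trans ha)
  exact (hanti hms.le (hms.trans hst).le hst).trans_le hs

theorem Real.Gamma_add_half_le_sqrt_mul_Gamma {x : ℝ} (hx : 0 < x) :
    Gamma (x + 1 / 2) ≤ √x * Gamma x := by
  have h := Gamma_mul_add_mul_le_rpow_Gamma_mul_rpow_Gamma hx (by linarith : 0 < x + 1)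
    one_half_pos one_half_pos (add_halves 1)
  rw [Gamma_add_one hx.ne', mul_rpow hx.le (Gamma_pos_of_pos hx).le, mul_left_comm,
    ← rpow_add (Gamma_pos_of_pos hx), add_halves, rpow_one, ← sqrt_eq_rpow] at h
  convert h using 2
  ring

theorem Real.integral_rpow_mul_one_sub_rpow {u v : ℝ} (hu : 0 < u) (hv : 0 < v) :
    ∫ x in (0 : ℝ)..1, x ^ (u - 1) * (1 - x) ^ (v - 1) = Gamma u * Gamma v / Gamma (u + v) := by
  have h := Complex.betaIntegral_eq_Gamma_mul_div u v (by simpa) (by simpa)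
  rw [Complex.betaIntegral, ← Complex.ofReal_add, Complex.Gamma_ofReal, Complex.Gamma_ofReal,
    Complex.Gamma_ofReal] at h
  have hreal : ∫ x in (0 : ℝ)..1, (x : ℂ) ^ ((u : ℂ) - 1) * (1 - (x : ℂ)) ^ ((v : ℂ) - 1)
      = ((∫ x in (0 : ℝ)..1, x ^ (u - 1) * (1 - x) ^ (v - 1) : ℝ) : ℂ) := by
    rw [← intervalIntegral.integral_ofReal]
    refine intervalIntegral.integral_congr fun x hx ↦ ?_
    rw [uIcc_of_le zero_le_one] at hx
    rw [Complex.ofReal_mul, Complex.ofReal_cpow hx.1, Complex.ofReal_cpow (sub_nonneg.2 hx.2)]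
    push_cast
    rfl
  rw [hreal] at h
  exact_mod_cast h

theorem integrable_one_add_sq_rpow_neg {s : ℝ} (hs : 1 / 2 < s) :
    Integrable fun t : ℝ ↦ (1 + t ^ 2) ^ (-s) := by
  have h := integrable_rpow_neg_one_add_norm_sq (E := ℝ) (μ := volume) (r := 2 * s)
    (by rw [Module.finrank_self]; push_cast; linarith)
  simp only [Real.norm_eq_abs, sq_abs, neg_div, mul_div_cancel_left₀ s two_ne_zero] at h
  exact h

theorem strictAntiOn_inv_one_add_sq : StrictAntiOn (fun t : ℝ ↦ (1 + t ^ 2)⁻¹) (Ioi 0) := by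
  intro a ha b _ hab
  have : 0 ≤ a := le_of_lt ha
  dsimp only
  gcongr

theorem image_inv_one_add_sq_Ioi : (fun t : ℝ ↦ (1 + t ^ 2)⁻¹) '' Ioi 0 = Ioo 0 1 := by
  refine Subset.antisymm ?_ fun y ⟨hy0, hy1⟩ ↦ ?_
  · rintro _ ⟨t, ht, rfl⟩
    exact ⟨by positivity, inv_lt_one_of_one_lt₀ (by nlinarith [mem_Ioi.1 ht])⟩
  · have : 1 < y⁻¹ := (one_lt_inv₀ hy0).2 hy1
    refine ⟨√(y⁻¹ - 1), sqrt_pos.2 (by linarith), ?_⟩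
    simp [sq_sqrt (by linarith : 0 ≤ y⁻¹ - 1)]

theorem abs_deriv_inv_one_add_sq_mul {s t : ℝ} (ht : 0 < t) :
    |-(2 * t) / (1 + t ^ 2) ^ 2| *
        ((1 + t ^ 2)⁻¹ ^ (s - 1 / 2 - 1) * (1 - (1 + t ^ 2)⁻¹) ^ (1 / 2 - 1 : ℝ) / 2)
      = (1 + t ^ 2) ^ (-s) := by
  set P := 1 + t ^ 2
  have hP : 0 < P := by positivity
  have hjac : |-(2 * t) / P ^ 2| = 2 * t / P ^ 2 := by
    rw [abs_div, abs_neg, abs_of_pos (by positivity), abs_of_pos (by positivity)]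
  have hfirst : P⁻¹ ^ (s - 1 / 2 - 1) = P ^ (3 / 2 - s) := by
    rw [inv_rpow hP.le, ← rpow_neg hP.le]
    ring_nf
  have hsecond : (1 - P⁻¹) ^ (1 / 2 - 1 : ℝ) = P ^ (1 / 2 : ℝ) / t := by
    have : 1 - P⁻¹ = t ^ 2 / P := by field_simp; ring
    rw [this, div_rpow (by positivity) hP.le, show (1 / 2 - 1 : ℝ) = -(1 / 2) by norm_num,
      rpow_neg (by positivity), rpow_neg hP.le, ← sqrt_eq_rpow, sqrt_sq ht.le, inv_div_inv]
  have hprod : P ^ (-s) * P ^ 2 = P ^ (3 / 2 - s) * P ^ (1 / 2 : ℝ) := by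
    rw [← rpow_natCast, ← rpow_add hP, ← rpow_add hP]
    ring_nf
  rw [hjac, hfirst, hsecond, mul_div_assoc', mul_div_assoc', ← hprod]
  field_simp

/-- Substituting `x = (1 + t²)⁻¹` turns this into a Beta integral `B(s - 1/2, 1/2) / 2`. -/
theorem integral_Ioi_one_add_sq_rpow_neg {s : ℝ} (hs : 1 / 2 < s) :
    ∫ t in Ioi 0, (1 + t ^ 2) ^ (-s) = √π * Gamma (s - 1 / 2) / Gamma s / 2 := by
  have hderiv (t : ℝ) : HasDerivAt (fun t : ℝ ↦ (1 + t ^ 2)⁻¹) (-(2 * t) / (1 + t ^ 2) ^ 2) t := by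
    have h : HasDerivAt (fun t : ℝ ↦ 1 + t ^ 2) (2 * t) t := by
      simpa using (hasDerivAt_pow 2 t).const_add 1
    exact h.inv (by positivity)
  have hsubst := integral_image_eq_integral_abs_deriv_smul measurableSet_Ioi
    (fun t _ ↦ (hderiv t).hasDerivWithinAt) strictAntiOn_inv_one_add_sq.injOn
    (fun x ↦ x ^ (s - 1 / 2 - 1) * (1 - x) ^ (1 / 2 - 1 : ℝ) / 2)
  simp only [smul_eq_mul] at hsubst
  rw [image_inv_one_add_sq_Ioi, ← integral_Ioc_eq_integral_Ioo, integral_div,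
    ← intervalIntegral.integral_of_le zero_le_one,
    integral_rpow_mul_one_sub_rpow (by linarith) one_half_pos, sub_add_cancel, Gamma_one_half_eq,
    setIntegral_congr_fun measurableSet_Ioi fun t ht ↦ abs_deriv_inv_one_add_sq_mul ht] at hsubst
  rw [← hsubst]
  ring

theorem integral_one_add_sq_rpow_neg {s : ℝ} (hs : 1 / 2 < s) :
    ∫ t, (1 + t ^ 2) ^ (-s) = √π * Gamma (s - 1 / 2) / Gamma s := by
  have h := integral_Ioi_zero_of_even (integrable_one_add_sq_rpow_neg hs) fun t ↦ by rw [neg_sq]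
  rw [integral_Ioi_one_add_sq_rpow_neg hs] at h
  linarith

noncomputable def stdNormalPDF (t : ℝ) : ℝ := (2 * π) ^ (-(1:ℝ)/2) * Real.exp (-t^2 / 2)

noncomputable def studentConst (ν : ℝ) : ℝ :=
  Real.Gamma ((ν + 1) / 2) / (Real.sqrt (ν * π) * Real.Gamma (ν / 2))

noncomputable def studentPDF (ν t : ℝ) : ℝ := studentConst ν * (1 + t ^ 2 / ν) ^ (-((ν + 1) / 2))

noncomputable def logPDFRatio (ν t : ℝ) : ℝ := log (stdNormalPDF t) - log (studentPDF ν t)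

theorem stdNormalCDF_eq (x : ℝ) : stdNormalCDF x = ∫ t in Iic x, stdNormalPDF t := rfl

theorem studentCDF_eq (ν x : ℝ) : studentCDF ν x = ∫ t in Iic x, studentPDF ν t := rfl

theorem stdNormalPDF_eq_gaussianPDFReal : stdNormalPDF = ProbabilityTheory.gaussianPDFReal 0 1 := by
  ext t
  rw [stdNormalPDF, ProbabilityTheory.gaussianPDFReal, neg_div, rpow_neg (by positivity),
    ← sqrt_eq_rpow]
  norm_num

theorem stdNormalPDF_pos (t : ℝ) : 0 < stdNormalPDF t := by
  rw [stdNormalPDF_eq_gaussianPDFReal]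
  exact ProbabilityTheory.gaussianPDFReal_pos 0 1 t one_ne_zero

theorem stdNormalPDF_neg (t : ℝ) : stdNormalPDF (-t) = stdNormalPDF t := by
  rw [stdNormalPDF, neg_sq, stdNormalPDF]

theorem integrable_stdNormalPDF : Integrable stdNormalPDF := by
  rw [stdNormalPDF_eq_gaussianPDFReal]
  exact ProbabilityTheory.integrable_gaussianPDFReal 0 1

theorem integral_stdNormalPDF : ∫ t, stdNormalPDF t = 1 := by
  rw [stdNormalPDF_eq_gaussianPDFReal]
  exact ProbabilityTheory.integral_gaussianPDFReal_eq_one 0 one_ne_zero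

theorem strictMono_stdNormalCDF : StrictMono stdNormalCDF :=
  strictMono_integral_Iic integrable_stdNormalPDF stdNormalPDF_pos

theorem stdNormalCDF_zero : stdNormalCDF 0 = 1 / 2 := by
  rw [stdNormalCDF_eq, integral_Iic_zero_of_even integrable_stdNormalPDF stdNormalPDF_neg,
    integral_stdNormalPDF]

theorem studentPDF_neg (ν t : ℝ) : studentPDF ν (-t) = studentPDF ν t := by
  rw [studentPDF, neg_sq, studentPDF]

section Student

variable {ν : ℝ} (hν : 0 < ν)
include hν

theorem studentConst_pos : 0 < studentConst ν := by
  have := Gamma_pos_of_pos (by linarith : 0 < (ν + 1) / 2)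
  have := Gamma_pos_of_pos (by linarith : 0 < ν / 2)
  have := sqrt_pos.2 (by positivity : 0 < ν * π)
  unfold studentConst
  positivity

theorem studentPDF_pos (t : ℝ) : 0 < studentPDF ν t :=
  mul_pos (studentConst_pos hν) (rpow_pos_of_pos (by positivity) _)

theorem studentPDF_eq_comp_div (t : ℝ) :
    studentPDF ν t = studentConst ν * (1 + (t / √ν) ^ 2) ^ (-((ν + 1) / 2)) := by
  rw [studentPDF, div_pow, sq_sqrt hν.le]

theorem integrable_studentPDF : Integrable (studentPDF ν) := by
  simp only [funext (studentPDF_eq_comp_div hν)]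
  exact ((integrable_one_add_sq_rpow_neg (by linarith)).comp_div
    (sqrt_pos.2 hν).ne').const_mul _

theorem integral_studentPDF : ∫ t, studentPDF ν t = 1 := by
  have hΓ := (Gamma_pos_of_pos (by linarith : 0 < (ν + 1) / 2)).ne'
  have hΓ' := (Gamma_pos_of_pos (by linarith : 0 < ν / 2)).ne'
  simp only [studentPDF_eq_comp_div hν, integral_const_mul]
  rw [Measure.integral_comp_div (fun u ↦ (1 + u ^ 2) ^ (-((ν + 1) / 2))), smul_eq_mul,
    abs_of_pos (sqrt_pos.2 hν), integral_one_add_sq_rpow_neg (by linarith),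
    show (ν + 1) / 2 - 1 / 2 = ν / 2 by ring, studentConst, sqrt_mul hν.le]
  field_simp

theorem studentConst_le : studentConst ν ≤ (2 * π) ^ (-(1:ℝ)/2) := by
  have hΓ := Gamma_add_half_le_sqrt_mul_Gamma (by linarith : 0 < ν / 2)
  rw [show ν / 2 + 1 / 2 = (ν + 1) / 2 by ring] at hΓ
  have hB : (2 * π) ^ (-(1:ℝ)/2) * √(ν * π) = √(ν / 2) := by
    rw [neg_div, rpow_neg (by positivity), ← sqrt_eq_rpow, ← div_eq_inv_mul,
      ← sqrt_div' _ (by positivity : 0 ≤ 2 * π)]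
    congr 1
    field_simp
  have := sqrt_pos.2 (by positivity : 0 < ν * π)
  rw [studentConst, div_le_iff₀ (by positivity), ← mul_assoc, hB]
  exact hΓ

theorem strictMono_studentCDF : StrictMono (studentCDF ν) :=
  strictMono_integral_Iic (integrable_studentPDF hν) (studentPDF_pos hν)

theorem studentCDF_zero : studentCDF ν 0 = 1 / 2 := by
  rw [studentCDF_eq, integral_Iic_zero_of_even (integrable_studentPDF hν) (studentPDF_neg ν),
    integral_studentPDF hν]

theorem logPDFRatio_eq (t : ℝ) :
    logPDFRatio ν t = log ((2 * π) ^ (-(1:ℝ)/2)) - log (studentConst ν) - t ^ 2 / 2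
      + (ν + 1) / 2 * log (1 + t ^ 2 / ν) := by
  rw [logPDFRatio, stdNormalPDF, studentPDF, log_mul (by positivity) (exp_pos _).ne', log_exp,
    log_mul (studentConst_pos hν).ne' (by positivity),
    log_rpow (by positivity : (0:ℝ) < 1 + t ^ 2 / ν)]
  ring

theorem hasDerivAt_logPDFRatio (t : ℝ) :
    HasDerivAt (logPDFRatio ν) (t * (1 - t ^ 2) / (ν + t ^ 2)) t := by
  have hbase : HasDerivAt (fun t ↦ 1 + t ^ 2 / ν) (2 * t / ν) t := by
    simpa using ((hasDerivAt_pow 2 t).div_const ν).const_add 1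
  have h := (((hasDerivAt_pow 2 t).div_const 2).const_sub
    (log ((2 * π) ^ (-(1:ℝ)/2)) - log (studentConst ν))).add
    ((hbase.log (by positivity)).const_mul ((ν + 1) / 2))
  rw [funext (logPDFRatio_eq hν)]
  refine h.congr_deriv ?_
  field_simp
  ring

theorem continuous_logPDFRatio : Continuous (logPDFRatio ν) :=
  continuous_iff_continuousAt.2 fun t ↦ (hasDerivAt_logPDFRatio hν t).continuousAt

theorem strictMonoOn_logPDFRatio : StrictMonoOn (logPDFRatio ν) (Icc 0 1) := by
  refine strictMonoOn_of_deriv_pos (convex_Icc 0 1) (continuous_logPDFRatio hν).continuousOn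
    fun t ht ↦ ?_
  rw [interior_Icc] at ht
  rw [(hasDerivAt_logPDFRatio hν t).deriv]
  have : 0 < 1 - t ^ 2 := by nlinarith [ht.1, ht.2]
  exact div_pos (mul_pos ht.1 this) (by positivity)

theorem strictAntiOn_logPDFRatio : StrictAntiOn (logPDFRatio ν) (Ici 1) := by
  refine strictAntiOn_of_deriv_neg (convex_Ici 1) (continuous_logPDFRatio hν).continuousOn
    fun t ht ↦ ?_
  rw [interior_Ici] at ht
  rw [(hasDerivAt_logPDFRatio hν t).deriv]
  have : 1 - t ^ 2 < 0 := by nlinarith [mem_Ioi.1 ht]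
  exact div_neg_of_neg_of_pos (mul_neg_of_pos_of_neg (by linarith [mem_Ioi.1 ht]) this)
    (by positivity)

theorem logPDFRatio_zero_nonneg : 0 ≤ logPDFRatio ν 0 := by
  rw [logPDFRatio_eq hν]
  simpa using log_le_log (studentConst_pos hν) (studentConst_le hν)

theorem stdNormalPDF_lt_studentPDF_iff (t : ℝ) :
    stdNormalPDF t < studentPDF ν t ↔ logPDFRatio ν t < 0 := by
  rw [logPDFRatio, sub_neg, log_lt_log_iff (stdNormalPDF_pos t) (studentPDF_pos hν t)]

theorem stdNormalPDF_lt_studentPDF_of_le {s t : ℝ} (hs : 0 < s) (hst : s < t)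
    (h : stdNormalPDF s ≤ studentPDF ν s) : stdNormalPDF t < studentPDF ν t := by
  rw [stdNormalPDF_lt_studentPDF_iff hν]
  refine lt_zero_of_nonpos_of_strictMonoOn_of_strictAntiOn (strictMonoOn_logPDFRatio hν)
    (strictAntiOn_logPDFRatio hν) (logPDFRatio_zero_nonneg hν) hs hst ?_
  rw [logPDFRatio, sub_nonpos]
  exact log_le_log (stdNormalPDF_pos s) h

theorem studentCDF_lt_stdNormalCDF {x : ℝ} (hx : 0 < x) : studentCDF ν x < stdNormalCDF x := by
  have hn := integrable_stdNormalPDF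
  have ht := integrable_studentPDF hν
  have key := integral_Iic_pos_of_sign_change (g := fun t ↦ stdNormalPDF t - studentPDF ν t)
    (hn.sub ht) ?_ ?_
    (fun s t hs hst h ↦ sub_neg.2 (stdNormalPDF_lt_studentPDF_of_le hν hs hst (sub_nonpos.1 h))) hx
  · rwa [integral_sub hn.integrableOn ht.integrableOn, sub_pos] at key
  · rw [integral_sub hn.integrableOn ht.integrableOn, ← stdNormalCDF_eq, ← studentCDF_eq,
      stdNormalCDF_zero, studentCDF_zero hν, sub_self]
  · rw [integral_sub hn ht, integral_stdNormalPDF, integral_studentPDF hν, sub_self]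

end Student

/-- For every `ν ≥ 1` and `q ∈ (1/2, 1)`, the standard normal quantile is strictly smaller
than the Student t quantile with `ν` degrees of freedom. -/
theorem zQuantile_lt_tQuantile (ν q : ℝ) (hν : 1 ≤ ν) (hq : q ∈ Set.Ioo (1/2 : ℝ) 1) :
    zQuantile q < tQuantile ν q := by
  have hν0 : 0 < ν := by linarith
  obtain ⟨hq1, hq2⟩ := hq
  have hz : stdNormalCDF (zQuantile q) = q := by
    refine Function.invFun_eq (exists_integral_Iic_eq integrable_stdNormalPDF (a := 0) ?_ ?_)
    · rw [← stdNormalCDF_eq, stdNormalCDF_zero]; exact hq1.le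
    · rwa [integral_stdNormalPDF]
  have ht : studentCDF ν (tQuantile ν q) = q := by
    refine Function.invFun_eq (exists_integral_Iic_eq (integrable_studentPDF hν0) (a := 0) ?_ ?_)
    · rw [← studentCDF_eq, studentCDF_zero hν0]; exact hq1.le
    · rwa [integral_studentPDF hν0]
  have htpos : 0 < tQuantile ν q := by
    rw [← (strictMono_studentCDF hν0).lt_iff_lt, ht, studentCDF_zero hν0]
    exact hq1
  rw [← strictMono_stdNormalCDF.lt_iff_lt, hz]
  calc q = studentCDF ν (tQuantile ν q) := ht.symm
    _ < stdNormalCDF (tQuantile ν q) := studentCDF_lt_stdNormalCDF hν0 htpos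
end

section
/- Let n, p be positive integers, X an n×p real matrix, W and D invertible n×n real diagonal matrices, y, μ, ξ ∈ ℝⁿ, β ∈ ℝᵖ, and φ > 0 a real number, and suppose XᵀWX is invertible. Define s_β = (1/φ) Xᵀ W D⁻¹ (y − μ), i_ββ = (1/φ) Xᵀ W X, the mean bias-reducing adjustment A* = XᵀW ξ, the first-order bias term b_β = −i_ββ⁻¹ A*, and the working variate z = Xβ + D⁻¹(y − μ). Then the quasi-Fisher scoring update for mean bias reduction equals an iteratively reweighted least squares update with working variate z + φξ: β + i_ββ⁻¹ s_β − b_β = (XᵀWX)⁻¹ XᵀW (z + φξ). -/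
open Matrix

/-! Since `i_ββ = φ⁻¹ XᵀWX`, its inverse is `φ (XᵀWX)⁻¹`, so the factors `1/φ` in the score
cancel and `-b_β = φ (XᵀWX)⁻¹ XᵀWξ`. Writing `β = (XᵀWX)⁻¹ XᵀW Xβ`, all three terms of the
update are `(XᵀWX)⁻¹ XᵀW` applied to the three summands of `z + φξ`. -/

namespace Matrix

variable {n K : Type*} [Fintype n] [DecidableEq n] [Field K] {A : Matrix n n K}

theorem inv_smul_of_ne_zero {c : K} (hc : c ≠ 0) (hA : IsUnit A.det) :
    (c • A)⁻¹ = c⁻¹ • A⁻¹ :=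
  inv_smul' A (Units.mk0 c hc) hA

theorem nonsing_inv_mulVec_mulVec (hA : IsUnit A.det) (v : n → K) : A⁻¹ *ᵥ (A *ᵥ v) = v := by
  rw [mulVec_mulVec, nonsing_inv_mul A hA, one_mulVec]

end Matrix

theorem mean_br_quasi_fisher_eq_iwls_general (n p : ℕ)
    (X : Matrix (Fin n) (Fin p) ℝ) (W D : Matrix (Fin n) (Fin n) ℝ)
    (y μ ξ : Fin n → ℝ) (β : Fin p → ℝ) (φ : ℝ) (hφ : 0 < φ)
    (hXWX : IsUnit (Xᵀ * W * X).det) :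
    let sβ : Fin p → ℝ := (1 / φ) • (Xᵀ * W * D⁻¹).mulVec (y - μ)
    let iββ : Matrix (Fin p) (Fin p) ℝ := (1 / φ) • (Xᵀ * W * X)
    let Astar : Fin p → ℝ := (Xᵀ * W).mulVec ξ
    let bβ : Fin p → ℝ := -(iββ⁻¹.mulVec Astar)
    let z : Fin n → ℝ := X.mulVec β + D⁻¹.mulVec (y - μ)
    β + iββ⁻¹.mulVec sβ - bβ = (Xᵀ * W * X)⁻¹.mulVec ((Xᵀ * W).mulVec (z + φ • ξ)) := by
  intro sβ iββ Astar bβ z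
  have hφ₀ : φ ≠ 0 := hφ.ne'
  have hinv : iββ⁻¹ = φ • (Xᵀ * W * X)⁻¹ := by
    rw [show iββ = φ⁻¹ • (Xᵀ * W * X) from congrArg (· • _) (one_div φ),
      inv_smul_of_ne_zero (inv_ne_zero hφ₀) hXWX, inv_inv]
  calc β + iββ⁻¹ *ᵥ sβ - bβ
      = (Xᵀ * W * X)⁻¹ *ᵥ ((Xᵀ * W * X) *ᵥ β) + (Xᵀ * W * X)⁻¹ *ᵥ ((Xᵀ * W * D⁻¹) *ᵥ (y - μ))
          + (Xᵀ * W * X)⁻¹ *ᵥ (φ • (Xᵀ * W) *ᵥ ξ) := by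
        rw [nonsing_inv_mulVec_mulVec hXWX, sub_neg_eq_add, hinv]
        simp only [sβ, Astar, smul_mulVec, mulVec_smul, smul_smul, one_div,
          inv_mul_cancel₀ hφ₀, one_smul]
    _ = (Xᵀ * W * X)⁻¹ *ᵥ ((Xᵀ * W) *ᵥ (z + φ • ξ)) := by
        simp only [z, mulVec_add, mulVec_smul, mulVec_mulVec, Matrix.mul_assoc]

/-- The quasi-Fisher scoring update for mean bias reduction equals an IWLS update with
adjusted working variate `z + φξ`: `β + i_ββ⁻¹ s_β - b_β = (XᵀWX)⁻¹ XᵀW (z + φξ)`,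
where `b_β = -i_ββ⁻¹ A*` and `A* = XᵀWξ`. -/
theorem mean_br_quasi_fisher_eq_iwls (n p : ℕ) (hn : 0 < n) (hp : 0 < p)
    (X : Matrix (Fin n) (Fin p) ℝ) (W D : Matrix (Fin n) (Fin n) ℝ)
    (hWdiag : W.IsDiag) (hDdiag : D.IsDiag)
    (hW : IsUnit W.det) (hD : IsUnit D.det)
    (y μ ξ : Fin n → ℝ) (β : Fin p → ℝ) (φ : ℝ) (hφ : 0 < φ)
    (hXWX : IsUnit (Xᵀ * W * X).det) :
    let sβ : Fin p → ℝ := (1 / φ) • (Xᵀ * W * D⁻¹).mulVec (y - μ)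
    let iββ : Matrix (Fin p) (Fin p) ℝ := (1 / φ) • (Xᵀ * W * X)
    let Astar : Fin p → ℝ := (Xᵀ * W).mulVec ξ
    let bβ : Fin p → ℝ := -(iββ⁻¹.mulVec Astar)
    let z : Fin n → ℝ := X.mulVec β + D⁻¹.mulVec (y - μ)
    β + iββ⁻¹.mulVec sβ - bβ = (Xᵀ * W * X)⁻¹.mulVec ((Xᵀ * W).mulVec (z + φ • ξ)) :=
  mean_br_quasi_fisher_eq_iwls_general n p X W D y μ ξ β φ hφ hXWX
end

section
/- Let n, p be positive integers, X an n×p real matrix, W and D invertible n×n real diagonal matrices, y, μ, ξ ∈ ℝⁿ, β ∈ ℝᵖ, and φ > 0 a real number, and suppose XᵀWX is invertible. Define the working variate z = Xβ + D⁻¹(y − μ). Then β is a fixed point of the adjusted iteratively reweighted least squares map, i.e. (XᵀWX)⁻¹ XᵀW (z + φξ) = β, if and only if the mean bias-reducing adjusted score equation holds at β, i.e. (1/φ) Xᵀ W D⁻¹ (y − μ) + XᵀW ξ = 0. -/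
/-! Multiplying through by `XᵀWX`, the fixed-point equation says that `XᵀW` annihilates the
residual `D⁻¹(y - μ) + φξ`, and `XᵀW (D⁻¹(y - μ) + φξ)` is `φ` times the adjusted score. -/

open Matrix

namespace Matrix

variable {m n k R : Type*} [CommRing R]

theorem inv_mulVec_eq_iff_eq_mulVec [Fintype n] [DecidableEq n] {A : Matrix n n R}
    (hA : IsUnit A.det) {u v : n → R} : A⁻¹ *ᵥ u = v ↔ u = A *ᵥ v := by
  constructor
  · rintro rfl
    rw [mulVec_mulVec, mul_nonsing_inv A hA, one_mulVec]
  · rintro rfl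
    rw [mulVec_mulVec, nonsing_inv_mul A hA, one_mulVec]

theorem mulVec_mulVec_add_eq_mul_mulVec_iff [Fintype m] [Fintype n] (M : Matrix k m R)
    (X : Matrix m n R) (β : n → R) (r : m → R) :
    M *ᵥ (X *ᵥ β + r) = (M * X) *ᵥ β ↔ M *ᵥ r = 0 := by
  rw [mulVec_add, mulVec_mulVec, add_eq_left]

end Matrix

theorem iwls_fixed_point_iff_adjusted_score_general (n p : ℕ)
    (X : Matrix (Fin n) (Fin p) ℝ) (W D : Matrix (Fin n) (Fin n) ℝ)
    (y μ ξ : Fin n → ℝ) (β : Fin p → ℝ) (φ : ℝ) (hφ : 0 < φ)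
    (hXWX : IsUnit (Xᵀ * W * X).det) :
    let z : Fin n → ℝ := X.mulVec β + D⁻¹.mulVec (y - μ)
    (Xᵀ * W * X)⁻¹.mulVec ((Xᵀ * W).mulVec (z + φ • ξ)) = β ↔
      (1 / φ) • (Xᵀ * W * D⁻¹).mulVec (y - μ) + (Xᵀ * W).mulVec ξ = 0 := by
  intro z
  have hscore : (Xᵀ * W) *ᵥ (D⁻¹ *ᵥ (y - μ) + φ • ξ) =
      φ • ((1 / φ) • (Xᵀ * W * D⁻¹) *ᵥ (y - μ) + (Xᵀ * W) *ᵥ ξ) := by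
    rw [smul_add, smul_smul, mul_one_div_cancel hφ.ne', one_smul, mulVec_add, mulVec_smul,
      mulVec_mulVec]
  rw [inv_mulVec_eq_iff_eq_mulVec hXWX, add_assoc,
    mulVec_mulVec_add_eq_mul_mulVec_iff, hscore, smul_eq_zero_iff_right hφ.ne']

/-- `β` is a fixed point of the adjusted IWLS map, `(XᵀWX)⁻¹ XᵀW (z + φξ) = β`, if and
only if the mean bias-reducing adjusted score equation
`(1/φ) XᵀWD⁻¹(y - μ) + XᵀWξ = 0` holds at `β`. -/
theorem iwls_fixed_point_iff_adjusted_score (n p : ℕ) (hn : 0 < n) (hp : 0 < p)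
    (X : Matrix (Fin n) (Fin p) ℝ) (W D : Matrix (Fin n) (Fin n) ℝ)
    (hWdiag : W.IsDiag) (hDdiag : D.IsDiag)
    (hW : IsUnit W.det) (hD : IsUnit D.det)
    (y μ ξ : Fin n → ℝ) (β : Fin p → ℝ) (φ : ℝ) (hφ : 0 < φ)
    (hXWX : IsUnit (Xᵀ * W * X).det) :
    let z : Fin n → ℝ := X.mulVec β + D⁻¹.mulVec (y - μ)
    (Xᵀ * W * X)⁻¹.mulVec ((Xᵀ * W).mulVec (z + φ • ξ)) = β ↔
      (1 / φ) • (Xᵀ * W * D⁻¹).mulVec (y - μ) + (Xᵀ * W).mulVec ξ = 0 :=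
  iwls_fixed_point_iff_adjusted_score_general n p X W D y μ ξ β φ hφ hXWX
end
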